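/- arXiv:2008.03969 — 8 statements merged into one kernel-verified Lean document; each statement's English description precedes it below -/
import Mathlib

section
/- Let ε > 0 and let b, c : [1, ∞) → ℝ be C² functions with c(s) > 0, c′(s) ≥ 0, b(s) ≥ s and 1 ≤ b′(s) ≤ 3 for all s ≥ 1, such that c′(s) → 0 as s → ∞, and suppose there is K > 0 with s^{2+ε}·|c″(s)| ≤ K·c(s) and s^{2+ε}·|c(s)²/b(s)⁴ − b′(s)c′(s)/(b(s)c(s))| ≤ K for all s ≥ 1. Then there exists L ∈ (0, ∞) such that c(s) → L as s → ∞. -/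
open Set Filter

/-- Monotonicity on a closed interval from a pointwise derivative lower bound. -/
lemma stmt5_monoIcc {f f' : ℝ → ℝ} {a b : ℝ}
    (hd : ∀ t ∈ Set.Icc a b, HasDerivAt f (f' t) t)
    (h0 : ∀ t ∈ Set.Icc a b, 0 ≤ f' t) : MonotoneOn f (Set.Icc a b) := by
  apply monotoneOn_of_deriv_nonneg (convex_Icc a b)
  · exact fun t ht => (hd t ht).continuousAt.continuousWithinAt
  · intro t ht
    rw [interior_Icc] at ht
    exact ((hd t (Ioo_subset_Icc_self ht)).differentiableAt).differentiableWithinAt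
  · intro t ht
    rw [interior_Icc] at ht
    rw [(hd t (Ioo_subset_Icc_self ht)).deriv]
    exact h0 t (Ioo_subset_Icc_self ht)

/-- Monotonicity on `[a,∞)` from continuity and a derivative bound on the interior. -/
lemma stmt5_monoIci {f f' : ℝ → ℝ} {a : ℝ}
    (hc : ContinuousOn f (Set.Ici a))
    (hd : ∀ t ∈ Set.Ioi a, HasDerivAt f (f' t) t)
    (h0 : ∀ t ∈ Set.Ioi a, 0 ≤ f' t) : MonotoneOn f (Set.Ici a) := by
  apply monotoneOn_of_deriv_nonneg (convex_Ici a) hc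
  · intro t ht
    rw [interior_Ici] at ht
    exact ((hd t ht).differentiableAt).differentiableWithinAt
  · intro t ht
    rw [interior_Ici] at ht
    rw [(hd t ht).deriv]
    exact h0 t ht

set_option maxHeartbeats 1000000 in
/-- Key analytic step in the characterization of asymptotically flat warped Berger
metrics: if on `[1,∞)` one has `c > 0`, `c' ≥ 0`, `b(s) ≥ s`, `1 ≤ b' ≤ 3`,
`c' → 0` at infinity, and the curvature-type bounds
`s^{2+ε}|c''| ≤ K c` and `s^{2+ε}|c²/b⁴ − b'c'/(bc)| ≤ K`, then the Hopf-fiber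
length `c` converges to a positive finite limit at spatial infinity. -/
theorem stmt_5 (ε : ℝ) (hε : 0 < ε) (b c : ℝ → ℝ)
    (hbreg : ContDiffOn ℝ 2 b (Set.Ici 1)) (hcreg : ContDiffOn ℝ 2 c (Set.Ici 1))
    (hcpos : ∀ s ≥ (1 : ℝ), 0 < c s)
    (hcmono : ∀ s ≥ (1 : ℝ), 0 ≤ deriv c s)
    (hblin : ∀ s ≥ (1 : ℝ), s ≤ b s)
    (hbderiv : ∀ s ≥ (1 : ℝ), 1 ≤ deriv b s ∧ deriv b s ≤ 3)
    (hcs0 : Filter.Tendsto (deriv c) Filter.atTop (nhds 0))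
    (K : ℝ) (hK : 0 < K)
    (hk03 : ∀ s ≥ (1 : ℝ), s ^ (2 + ε) * |deriv (deriv c) s| ≤ K * c s)
    (hk13 : ∀ s ≥ (1 : ℝ),
      s ^ (2 + ε) * |(c s) ^ 2 / (b s) ^ 4 - deriv b s * deriv c s / (b s * c s)| ≤ K) :
    ∃ L : ℝ, 0 < L ∧ Filter.Tendsto c Filter.atTop (nhds L) := by
  -- Differentiability facts at interior points
  have hcd : ∀ t ∈ Set.Ioi (1:ℝ), HasDerivAt c (deriv c t) t := by
    intro t ht
    have hmem : Set.Ici (1:ℝ) ∈ nhds t := Ici_mem_nhds ht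
    exact ((hcreg.differentiableOn (by norm_num)).differentiableAt hmem).hasDerivAt
  have hbd : ∀ t ∈ Set.Ioi (1:ℝ), HasDerivAt b (deriv b t) t := by
    intro t ht
    have hmem : Set.Ici (1:ℝ) ∈ nhds t := Ici_mem_nhds ht
    exact ((hbreg.differentiableOn (by norm_num)).differentiableAt hmem).hasDerivAt
  have hcreg' : ContDiffOn ℝ 1 (deriv c) (Set.Ioi (1:ℝ)) :=
    (hcreg.mono (Set.Ioi_subset_Ici_self)).deriv_of_isOpen (m := 1) isOpen_Ioi (by norm_num)
  have hcd2 : ∀ t ∈ Set.Ioi (1:ℝ), HasDerivAt (deriv c) (deriv (deriv c) t) t := by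
    intro t ht
    have hmem : Set.Ioi (1:ℝ) ∈ nhds t := Ioi_mem_nhds ht
    exact (((hcreg'.differentiableOn one_ne_zero)).differentiableAt hmem).hasDerivAt
  have hccont : ContinuousOn c (Set.Ici 1) := hcreg.continuousOn
  have hbcont : ContinuousOn b (Set.Ici 1) := hbreg.continuousOn
  -- c is monotone on [1, ∞)
  have cMono : MonotoneOn c (Set.Ici 1) :=
    stmt5_monoIci hccont hcd (fun t ht => hcmono t (le_of_lt ht))
  have hb1 : (1:ℝ) ≤ b 1 := hblin 1 le_rfl
  set B : ℝ := b 1 + 3 with hB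
  have hBpos : 0 < B := by positivity
  -- upper bound on b
  have bBound : ∀ t ≥ (1:ℝ), b t ≤ B * t := by
    intro t ht
    have hmono : MonotoneOn (fun t => 3 * t - b t) (Set.Ici 1) := by
      apply stmt5_monoIci ((continuousOn_const.mul continuousOn_id).sub hbcont)
      · intro u hu
        exact ((hasDerivAt_id u).const_mul 3).sub (hbd u hu)
      · intro u hu
        have := (hbderiv u (le_of_lt hu)).2
        simp only [mul_one]
        linarith
    have h' : 3 * 1 - b 1 ≤ 3 * t - b t := hmono (Set.mem_Ici.2 le_rfl) (Set.mem_Ici.2 ht) ht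
    nlinarith
  -- consequence of hk13 : pointwise bound on c'
  have hk13' : ∀ T ≥ (1:ℝ),
      deriv c T ≤ c T ^ 3 / T ^ 3 + K * B * c T * T ^ (-(1+ε)) := by
    intro T hT
    have hT0 : (0:ℝ) < T := lt_of_lt_of_le one_pos hT
    have hcT : 0 < c T := hcpos T hT
    have hbT : 0 < b T := lt_of_lt_of_le hT0 (hblin T hT)
    have hrp : (0:ℝ) < T ^ (2+ε) := Real.rpow_pos_of_pos hT0 _
    have h1 : |(c T) ^ 2 / (b T) ^ 4 - deriv b T * deriv c T / (b T * c T)|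
        ≤ K * T ^ (-(2+ε)) := by
      have h := hk13 T hT
      rw [Real.rpow_neg hT0.le, ← div_eq_mul_inv, le_div_iff₀ hrp]
      calc |(c T) ^ 2 / (b T) ^ 4 - deriv b T * deriv c T / (b T * c T)| * T ^ (2+ε)
          = T ^ (2+ε) * |(c T) ^ 2 / (b T) ^ 4 - deriv b T * deriv c T / (b T * c T)| := by ring
        _ ≤ K := h
    have h2 : deriv b T * deriv c T / (b T * c T)
        ≤ (c T) ^ 2 / (b T) ^ 4 + K * T ^ (-(2+ε)) := by
      have := abs_le.1 h1
      linarith [this.2]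
    have h3 : deriv c T / (b T * c T) ≤ deriv b T * deriv c T / (b T * c T) := by
      apply div_le_div_of_nonneg_right ?_ (by positivity)
      nlinarith [(hbderiv T hT).1, hcmono T hT]
    have h4 : deriv c T ≤ (b T * c T) * ((c T) ^ 2 / (b T) ^ 4 + K * T ^ (-(2+ε))) := by
      have h5 : deriv c T / (b T * c T) ≤ (c T) ^ 2 / (b T) ^ 4 + K * T ^ (-(2+ε)) :=
        le_trans h3 h2
      calc deriv c T = (deriv c T / (b T * c T)) * (b T * c T) := by
            field_simp
        _ ≤ ((c T) ^ 2 / (b T) ^ 4 + K * T ^ (-(2+ε))) * (b T * c T) := by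
            apply mul_le_mul_of_nonneg_right h5 (by positivity)
        _ = (b T * c T) * ((c T) ^ 2 / (b T) ^ 4 + K * T ^ (-(2+ε))) := by ring
    have hfrac : (b T * c T) * ((c T) ^ 2 / (b T) ^ 4) ≤ c T ^ 3 / T ^ 3 := by
      have hbT3 : T ^ 3 ≤ b T ^ 3 := pow_le_pow_left₀ hT0.le (hblin T hT) 3
      have : (b T * c T) * ((c T) ^ 2 / (b T) ^ 4) = c T ^ 3 / b T ^ 3 := by
        field_simp
      rw [this]
      apply div_le_div_of_nonneg_left (by positivity) (by positivity) hbT3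
    have hsec : (b T * c T) * (K * T ^ (-(2+ε))) ≤ K * B * c T * T ^ (-(1+ε)) := by
      have hbB := bBound T hT
      have hrpn : (0:ℝ) < T ^ (-(2+ε)) := Real.rpow_pos_of_pos hT0 _
      have hTmul : T * T ^ (-(2+ε)) = T ^ (-(1+ε)) := by
        rw [show (-(1+ε)) = 1 + -(2+ε) by ring, Real.rpow_add hT0, Real.rpow_one]
      calc (b T * c T) * (K * T ^ (-(2+ε)))
          ≤ (B * T * c T) * (K * T ^ (-(2+ε))) := by
            apply mul_le_mul_of_nonneg_right _ (by positivity)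
            apply mul_le_mul_of_nonneg_right hbB hcT.le
        _ = K * B * c T * (T * T ^ (-(2+ε))) := by ring
        _ = K * B * c T * T ^ (-(1+ε)) := by rw [hTmul]
    calc deriv c T ≤ (b T * c T) * ((c T) ^ 2 / (b T) ^ 4 + K * T ^ (-(2+ε))) := h4
      _ = (b T * c T) * ((c T) ^ 2 / (b T) ^ 4) + (b T * c T) * (K * T ^ (-(2+ε))) := by ring
      _ ≤ c T ^ 3 / T ^ 3 + K * B * c T * T ^ (-(1+ε)) := add_le_add hfrac hsec
  -- consequence of hk03 : lower bound on c''
  have hk03' : ∀ t ≥ (1:ℝ), -(K * c t * t ^ (-(2+ε))) ≤ deriv (deriv c) t := by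
    intro t ht
    have ht0 : (0:ℝ) < t := lt_of_lt_of_le one_pos ht
    have hrp : (0:ℝ) < t ^ (2+ε) := Real.rpow_pos_of_pos ht0 _
    have h1 : |deriv (deriv c) t| ≤ K * c t * t ^ (-(2+ε)) := by
      rw [Real.rpow_neg ht0.le, mul_assoc, ← div_eq_mul_inv, ← mul_div_assoc,
        le_div_iff₀ hrp]
      calc |deriv (deriv c) t| * t ^ (2+ε)
          = t ^ (2+ε) * |deriv (deriv c) t| := by ring
        _ ≤ K * c t := hk03 t ht
    linarith [(abs_le.1 h1).1]
  -- Step 1: choose S₁ with c' ≤ 1/8 beyond S₁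
  have hev : ∀ᶠ s in atTop, deriv c s < 1/8 := by
    have := hcs0.eventually (eventually_lt_nhds (show (0:ℝ) < 1/8 by norm_num))
    exact this
  obtain ⟨S₁', hS₁'⟩ := eventually_atTop.1 hev
  set S₁ : ℝ := max S₁' 1 with hS₁def
  have hS₁1 : (1:ℝ) ≤ S₁ := le_max_right _ _
  have hS₁small : ∀ s ≥ S₁, deriv c s < 1/8 := fun s hs => hS₁' s (le_trans (le_max_left _ _) hs)
  -- sublinear bound : c t ≤ c S₁ + t/8 for t ≥ S₁
  have subl : ∀ t ≥ S₁, c t ≤ c S₁ + t / 8 := by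
    intro t ht
    have hmono : MonotoneOn (fun t => t / 8 - c t) (Set.Ici S₁) := by
      apply stmt5_monoIci
      · exact (continuousOn_id.div_const 8).sub (hccont.mono (Set.Ici_subset_Ici.2 hS₁1))
      · intro u hu
        exact ((hasDerivAt_id u).div_const 8).sub
          (hcd u (lt_of_le_of_lt hS₁1 hu))
      · intro u hu
        have := hS₁small u (le_of_lt hu)
        show (0:ℝ) ≤ 1/8 - deriv c u
        linarith
    have h' : S₁ / 8 - c S₁ ≤ t / 8 - c t := hmono (Set.mem_Ici.2 le_rfl) (Set.mem_Ici.2 ht) ht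
    have hS₁0 : 0 ≤ S₁ := le_trans zero_le_one hS₁1
    linarith
  -- Step 2: choose threshold where x^(-ε) is small
  set δ : ℝ := min (1/(4*K*B)) (ε*(1+ε)/(4*K)) with hδdef
  have hδpos : 0 < δ := by
    apply lt_min <;> positivity
  have hev2 : ∀ᶠ x in atTop, x ^ (-ε) < δ :=
    (tendsto_rpow_neg_atTop hε).eventually (eventually_lt_nhds hδpos)
  obtain ⟨T₂, hT₂⟩ := eventually_atTop.1 hev2
  set S₀ : ℝ := max (max S₁ (8 * c S₁)) (max T₂ 2) with hS₀def
  have hS₀S₁ : S₁ ≤ S₀ := le_trans (le_max_left _ _) (le_max_left _ _)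
  have hS₀c : 8 * c S₁ ≤ S₀ := le_trans (le_max_right _ _) (le_max_left _ _)
  have hS₀T₂ : T₂ ≤ S₀ := le_trans (le_max_left _ _) (le_max_right _ _)
  have hS₀2 : (2:ℝ) ≤ S₀ := le_trans (le_max_right _ _) (le_max_right _ _)
  have hS₀1 : (1:ℝ) ≤ S₀ := by linarith
  have hS₀gt1 : (1:ℝ) < S₀ := by linarith
  -- (1) c T ≤ T / 4 for T ≥ S₀
  have hquarter : ∀ T ≥ S₀, c T ≤ T / 4 := by
    intro T hT
    have h1 := subl T (le_trans hS₀S₁ hT)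
    have h2 : c S₁ ≤ T / 8 := by
      have : 8 * c S₁ ≤ T := le_trans hS₀c hT
      linarith
    linarith
  -- (2) T * c' T ≤ (5/16) * c T for T ≥ S₀
  have hTc' : ∀ T ≥ S₀, T * deriv c T ≤ (5/16) * c T := by
    intro T hT
    have hT1 : (1:ℝ) ≤ T := le_trans hS₀1 hT
    have hT0 : (0:ℝ) < T := by linarith
    have hcT : 0 < c T := hcpos T hT1
    have h1 := hk13' T hT1
    have hTmul : T * T ^ (-(1+ε)) = T ^ (-ε) := by
      rw [show (-ε) = 1 + -(1+ε) by ring, Real.rpow_add hT0, Real.rpow_one]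
    have h2 : T * deriv c T ≤ c T ^ 3 / T ^ 2 + K * B * c T * T ^ (-ε) := by
      have := mul_le_mul_of_nonneg_left h1 hT0.le
      calc T * deriv c T ≤ T * (c T ^ 3 / T ^ 3 + K * B * c T * T ^ (-(1+ε))) := this
        _ = c T ^ 3 / T ^ 2 + K * B * c T * (T * T ^ (-(1+ε))) := by
            field_simp
        _ = c T ^ 3 / T ^ 2 + K * B * c T * T ^ (-ε) := by rw [hTmul]
    have h3 : c T ^ 3 / T ^ 2 ≤ (1/16) * c T := by
      have hq := hquarter T hT
      have hsq : c T ^ 2 ≤ (T/4)^2 := by nlinarith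
      have hcube : c T ^ 3 ≤ (T/4)^2 * c T := by nlinarith
      rw [div_le_iff₀ (by positivity)]
      nlinarith
    have h4 : K * B * c T * T ^ (-ε) ≤ (1/4) * c T := by
      have hδ1 : T ^ (-ε) < δ := hT₂ T (le_trans hS₀T₂ hT)
      have hδ2 : δ ≤ 1/(4*K*B) := min_le_left _ _
      have hKB : K * B * T ^ (-ε) ≤ 1/4 := by
        calc K * B * T ^ (-ε) ≤ K * B * (1/(4*K*B)) :=
              mul_le_mul_of_nonneg_left (le_of_lt (lt_of_lt_of_le hδ1 hδ2)) (by positivity)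
          _ = 1/4 := by field_simp
      calc K * B * c T * T ^ (-ε) = (K * B * T ^ (-ε)) * c T := by ring
        _ ≤ (1/4) * c T := mul_le_mul_of_nonneg_right hKB hcT.le
    linarith
  -- (3) main comparison argument : c T ≤ (16/7) * c S₀ for T ≥ S₀
  have hbound : ∀ T ≥ S₀, c T ≤ (16/7) * c S₀ := by
    intro T hT
    have hT1 : (1:ℝ) ≤ T := le_trans hS₀1 hT
    have hT0 : (0:ℝ) < T := by linarith
    have hcT : 0 < c T := hcpos T hT1
    set A : ℝ := K * c T / (1 + ε) with hAdef
    have hApos : 0 < A := by positivity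
    -- first comparison: c' t ≤ c' T + A * t^(-(1+ε)) on [S₀, T]
    have comp1 : ∀ t ∈ Set.Icc S₀ T, deriv c t ≤ deriv c T + A * t ^ (-(1+ε)) := by
      have hmono : MonotoneOn (fun t => deriv c t - A * t ^ (-(1+ε))) (Set.Icc S₀ T) := by
        apply stmt5_monoIcc (f' := fun t =>
          deriv (deriv c) t - A * (-(1+ε) * t ^ (-(1+ε) - 1)))
        · intro t ht
          have ht1 : (1:ℝ) < t := lt_of_lt_of_le hS₀gt1 ht.1
          exact (hcd2 t ht1).sub
            ((Real.hasDerivAt_rpow_const (Or.inl (by linarith))).const_mul A)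
        · intro t ht
          have ht1 : (1:ℝ) < t := lt_of_lt_of_le hS₀gt1 ht.1
          have ht0 : (0:ℝ) < t := by linarith
          have hexp : -(1+ε) - 1 = -(2+ε) := by ring
          rw [hexp]
          have h1 := hk03' t ht1.le
          have hct : c t ≤ c T := cMono (Set.mem_Ici.2 ht1.le) (Set.mem_Ici.2 hT1) ht.2
          have hrpn : (0:ℝ) < t ^ (-(2+ε)) := Real.rpow_pos_of_pos ht0 _
          have h2 : K * c t * t ^ (-(2+ε)) ≤ K * c T * t ^ (-(2+ε)) := by
            apply mul_le_mul_of_nonneg_right _ hrpn.le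
            nlinarith
          have hAe : A * (1+ε) = K * c T := by
            rw [hAdef]; field_simp
          nlinarith
      intro t ht
      have hTmem : T ∈ Set.Icc S₀ T := ⟨hT, le_rfl⟩
      have h' : deriv c t - A * t ^ (-(1+ε)) ≤ deriv c T - A * T ^ (-(1+ε)) :=
        hmono ht hTmem ht.2
      have hTrp : (0:ℝ) ≤ T ^ (-(1+ε)) := (Real.rpow_pos_of_pos hT0 _).le
      nlinarith
    -- second comparison: integrate the previous bound
    have comp2 : c T ≤ c S₀ + T * deriv c T + (A/ε) * S₀ ^ (-ε) := by
      have hmono : MonotoneOn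
          (fun t => deriv c T * t - (A/ε) * t ^ (-ε) - c t) (Set.Icc S₀ T) := by
        apply stmt5_monoIcc (f' := fun t =>
          deriv c T - (A/ε) * (-ε * t ^ (-ε - 1)) - deriv c t)
        · intro t ht
          have ht1 : (1:ℝ) < t := lt_of_lt_of_le hS₀gt1 ht.1
          have hid : HasDerivAt (fun x : ℝ => deriv c T * x) (deriv c T) t := by
            simpa using (hasDerivAt_id t).const_mul (deriv c T)
          exact (hid.sub
            ((Real.hasDerivAt_rpow_const (Or.inl (by linarith))).const_mul (A/ε))).sub
            (hcd t ht1)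
        · intro t ht
          have ht1 : (1:ℝ) < t := lt_of_lt_of_le hS₀gt1 ht.1
          have ht0 : (0:ℝ) < t := by linarith
          have hexp : -ε - 1 = -(1+ε) := by ring
          rw [hexp]
          have h1 := comp1 t ht
          have hAe : (A/ε) * ε = A := by field_simp
          have : (A/ε) * (-ε * t ^ (-(1+ε))) = -(A * t ^ (-(1+ε))) := by
            rw [show (A/ε) * (-ε * t ^ (-(1+ε))) = -((A/ε) * ε * t ^ (-(1+ε))) by ring, hAe]
          rw [this]
          linarith
      have hS₀mem : S₀ ∈ Set.Icc S₀ T := ⟨le_rfl, hT⟩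
      have hTmem : T ∈ Set.Icc S₀ T := ⟨hT, le_rfl⟩
      have h : deriv c T * S₀ - (A/ε) * S₀ ^ (-ε) - c S₀
          ≤ deriv c T * T - (A/ε) * T ^ (-ε) - c T := hmono hS₀mem hTmem hT
      have hc'T : 0 ≤ deriv c T := hcmono T hT1
      have hS₀0 : (0:ℝ) < S₀ := by linarith
      have hTrp : (0:ℝ) ≤ T ^ (-ε) := (Real.rpow_pos_of_pos hT0 _).le
      have hS₀rp : (0:ℝ) ≤ S₀ ^ (-ε) := (Real.rpow_pos_of_pos hS₀0 _).le
      have hAε : 0 ≤ A / ε := le_of_lt (div_pos hApos hε)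
      linarith [mul_nonneg hc'T hS₀0.le, mul_nonneg hAε hTrp]
    -- the remainder term is at most c T / 4
    have hrem : (A/ε) * S₀ ^ (-ε) ≤ (1/4) * c T := by
      have hδ1 : S₀ ^ (-ε) < δ := hT₂ S₀ hS₀T₂
      have hδ2 : δ ≤ ε*(1+ε)/(4*K) := min_le_right _ _
      have hS₀0 : (0:ℝ) < S₀ := by linarith
      have hrp : (0:ℝ) ≤ S₀ ^ (-ε) := (Real.rpow_pos_of_pos hS₀0 _).le
      have h1 : S₀ ^ (-ε) ≤ ε*(1+ε)/(4*K) := le_of_lt (lt_of_lt_of_le hδ1 hδ2)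
      have h2 : (A/ε) * S₀ ^ (-ε) ≤ (A/ε) * (ε*(1+ε)/(4*K)) := by
        apply mul_le_mul_of_nonneg_left h1 (by positivity)
      calc (A/ε) * S₀ ^ (-ε) ≤ (A/ε) * (ε*(1+ε)/(4*K)) := h2
        _ = (1/4) * c T := by
            rw [hAdef]; field_simp
    have h5 := hTc' T hT
    linarith
  -- conclude : c is monotone and bounded, hence converges
  set d : ℝ → ℝ := fun s => c (max s S₀) with hddef
  have dmono : Monotone d := by
    intro x y hxy
    exact cMono (Set.mem_Ici.2 (le_trans hS₀1 (le_max_right _ _)))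
      (Set.mem_Ici.2 (le_trans hS₀1 (le_max_right _ _)))
      (max_le_max hxy le_rfl)
  have dbdd : BddAbove (Set.range d) := by
    refine ⟨(16/7) * c S₀, ?_⟩
    rintro _ ⟨x, rfl⟩
    exact hbound (max x S₀) (le_max_right _ _)
  have hL := tendsto_atTop_ciSup dmono dbdd
  refine ⟨⨆ s, d s, ?_, ?_⟩
  · have h1 : d S₀ ≤ ⨆ s, d s := le_ciSup dbdd S₀
    have h2 : d S₀ = c S₀ := by simp [hddef]
    have h3 : 0 < c S₀ := hcpos S₀ hS₀1
    linarith [h2 ▸ h1]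
  · apply hL.congr'
    filter_upwards [eventually_ge_atTop S₀] with s hs
    simp [hddef, max_eq_left hs]
end

section
/- Let U ⊆ {(x,t) ∈ ℝ² : x > 0} be open and let ξ, b, c : U → ℝ be smooth and positive, satisfying the warped Berger Ricci flow system: ∂ₜξ = ξ(2 b_ss/b + c_ss/c), ∂ₜb = b_ss + (c_s/c + b_s/b) b_s + 2u²/b − 4/b, ∂ₜc = c_ss + 2 b_s c_s/b − 2u³/b, where u := c/b, f_s := ξ⁻¹ ∂ₓ f, and ∂ₜ is taken at fixed x. Then b_s satisfies on U the evolution equation ∂ₜ(b_s) = Δ(b_s) − 2 b_s b_ss/b + b⁻²·( b_s(4 − b_s² − (c_s u⁻¹)² − 6u²) + 4 c_s u ), where Δf := f_ss + (2 b_s/b + c_s/c) f_s. -/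
/-- Spatial partial derivative `∂ₓ f` (at fixed `t`) of a function of `(x,t)`. -/
noncomputable def partialX (f : ℝ × ℝ → ℝ) (p : ℝ × ℝ) : ℝ :=
  deriv (fun y => f (y, p.2)) p.1

/-- Time partial derivative `∂ₜ f` (at fixed `x`) of a function of `(x,t)`. -/
noncomputable def partialT (f : ℝ × ℝ → ℝ) (p : ℝ × ℝ) : ℝ :=
  deriv (fun τ => f (p.1, τ)) p.2

/-- Arc-length derivative `f_s := ξ⁻¹ ∂ₓ f`. -/
noncomputable def derivS (ξ f : ℝ × ℝ → ℝ) (p : ℝ × ℝ) : ℝ :=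
  (ξ p)⁻¹ * partialX f p

/-- Laplacian `Δf := f_ss + (2 b_s/b + c_s/c) f_s` of a radial function along a
warped Berger metric with coefficients `ξ, b, c`. -/
noncomputable def lapS (ξ b c f : ℝ × ℝ → ℝ) (p : ℝ × ℝ) : ℝ :=
  derivS ξ (derivS ξ f) p
    + (2 * derivS ξ b p / b p + derivS ξ c p / c p) * derivS ξ f p

open Filter Topology

section helpers

variable {F : Type*} [NormedAddCommGroup F] [NormedSpace ℝ F]

lemma hasDerivAt_sliceX (f : ℝ × ℝ → F) {p : ℝ × ℝ} (hf : DifferentiableAt ℝ f p) :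
    HasDerivAt (fun y => f (y, p.2)) (fderiv ℝ f p (1, 0)) p.1 := by
  have h := hf.hasFDerivAt.comp_hasDerivAt p.1
    ((hasDerivAt_id p.1).prodMk (hasDerivAt_const p.1 p.2))
  simpa [Function.comp_def] using h

lemma hasDerivAt_sliceT (f : ℝ × ℝ → F) {p : ℝ × ℝ} (hf : DifferentiableAt ℝ f p) :
    HasDerivAt (fun τ => f (p.1, τ)) (fderiv ℝ f p (0, 1)) p.2 := by
  have h := hf.hasFDerivAt.comp_hasDerivAt p.2
    ((hasDerivAt_const p.2 p.1).prodMk (hasDerivAt_id p.2))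
  simpa [Function.comp_def] using h

lemma partialX_eq {f : ℝ × ℝ → ℝ} {p : ℝ × ℝ} (hf : DifferentiableAt ℝ f p) :
    partialX f p = fderiv ℝ f p (1, 0) := (hasDerivAt_sliceX f hf).deriv

lemma partialT_eq {f : ℝ × ℝ → ℝ} {p : ℝ × ℝ} (hf : DifferentiableAt ℝ f p) :
    partialT f p = fderiv ℝ f p (0, 1) := (hasDerivAt_sliceT f hf).deriv

lemma sliceX_eventuallyEq {f g : ℝ × ℝ → F} {U : Set (ℝ × ℝ)} (hU : IsOpen U)
    (h : ∀ q ∈ U, f q = g q) {p : ℝ × ℝ} (hp : p ∈ U) :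
    (fun y => f (y, p.2)) =ᶠ[𝓝 p.1] fun y => g (y, p.2) := by
  have hc : ContinuousAt (fun y : ℝ => (y, p.2)) p.1 :=
    (continuous_id.prodMk continuous_const).continuousAt
  filter_upwards [hc (hU.mem_nhds (by simpa using hp))] with y hy using h _ hy

lemma partialX_congr {f g : ℝ × ℝ → ℝ} {U : Set (ℝ × ℝ)} (hU : IsOpen U)
    (h : ∀ q ∈ U, f q = g q) {p : ℝ × ℝ} (hp : p ∈ U) :
    partialX f p = partialX g p :=
  (sliceX_eventuallyEq hU h hp).deriv_eq

lemma partialT_congr {f g : ℝ × ℝ → ℝ} {U : Set (ℝ × ℝ)} (hU : IsOpen U)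
    (h : ∀ q ∈ U, f q = g q) {p : ℝ × ℝ} (hp : p ∈ U) :
    partialT f p = partialT g p := by
  apply Filter.EventuallyEq.deriv_eq
  have hc : ContinuousAt (fun τ : ℝ => (p.1, τ)) p.2 :=
    (continuous_const.prodMk continuous_id).continuousAt
  filter_upwards [hc (hU.mem_nhds (by simpa using hp))] with τ hτ using h _ hτ

end helpers

/-- Smooth representative of the arc-length derivative. -/
noncomputable def auxS (ξ f : ℝ × ℝ → ℝ) : ℝ × ℝ → ℝ :=
  fun q => (ξ q)⁻¹ * fderiv ℝ f q (1, 0)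

set_option maxHeartbeats 1000000 in
/-- Evolution equation of `b_s` along a warped Berger Ricci flow:
`∂ₜ b_s = Δ b_s − 2 b_s b_ss / b + b⁻²( b_s(4 − b_s² − (c_s u⁻¹)² − 6u²) + 4 c_s u )`
with `u := c/b`. -/
theorem stmt_6 (U : Set (ℝ × ℝ)) (hU : IsOpen U) (hUx : ∀ p ∈ U, 0 < p.1)
    (ξ b c : ℝ × ℝ → ℝ)
    (hξreg : ContDiffOn ℝ (⊤ : ℕ∞) ξ U) (hbreg : ContDiffOn ℝ (⊤ : ℕ∞) b U)
    (hcreg : ContDiffOn ℝ (⊤ : ℕ∞) c U)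
    (hξpos : ∀ p ∈ U, 0 < ξ p) (hbpos : ∀ p ∈ U, 0 < b p) (hcpos : ∀ p ∈ U, 0 < c p)
    (hflowξ : ∀ p ∈ U, partialT ξ p =
      ξ p * (2 * derivS ξ (derivS ξ b) p / b p + derivS ξ (derivS ξ c) p / c p))
    (hflowb : ∀ p ∈ U, partialT b p =
      derivS ξ (derivS ξ b) p
        + (derivS ξ c p / c p + derivS ξ b p / b p) * derivS ξ b p
        + 2 * (c p / b p) ^ 2 / b p - 4 / b p)
    (hflowc : ∀ p ∈ U, partialT c p =
      derivS ξ (derivS ξ c) p + 2 * derivS ξ b p * derivS ξ c p / b p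
        - 2 * (c p / b p) ^ 3 / b p) :
    ∀ p ∈ U, partialT (derivS ξ b) p =
      lapS ξ b c (derivS ξ b) p
        - 2 * derivS ξ b p * derivS ξ (derivS ξ b) p / b p
        + ((b p) ^ 2)⁻¹ *
          (derivS ξ b p * (4 - (derivS ξ b p) ^ 2
              - (derivS ξ c p / (c p / b p)) ^ 2 - 6 * (c p / b p) ^ 2)
            + 4 * derivS ξ c p * (c p / b p)) := by
  intro p hp
  have hpU : U ∈ 𝓝 p := hU.mem_nhds hp
  -- differentiability of the basic functions on U
  have hξd : ∀ q ∈ U, DifferentiableAt ℝ ξ q := fun q hq =>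
    (hξreg.contDiffAt (hU.mem_nhds hq)).differentiableAt (by simp)
  have hbd : ∀ q ∈ U, DifferentiableAt ℝ b q := fun q hq =>
    (hbreg.contDiffAt (hU.mem_nhds hq)).differentiableAt (by simp)
  have hcd : ∀ q ∈ U, DifferentiableAt ℝ c q := fun q hq =>
    (hcreg.contDiffAt (hU.mem_nhds hq)).differentiableAt (by simp)
  have hξne : ∀ q ∈ U, ξ q ≠ 0 := fun q hq => (hξpos q hq).ne'
  have hX0 : ξ p ≠ 0 := (hξpos p hp).ne'
  have hB0 : b p ≠ 0 := (hbpos p hp).ne'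
  have hC0 : c p ≠ 0 := (hcpos p hp).ne'
  -- regularity of the arc-length derivatives
  have hBs_reg : ContDiffOn ℝ (⊤ : ℕ∞) (auxS ξ b) U :=
    (hξreg.inv hξne).mul
      ((hbreg.fderiv_of_isOpen hU (by simp)).clm_apply contDiffOn_const)
  have hCs_reg : ContDiffOn ℝ (⊤ : ℕ∞) (auxS ξ c) U :=
    (hξreg.inv hξne).mul
      ((hcreg.fderiv_of_isOpen hU (by simp)).clm_apply contDiffOn_const)
  have hBss_reg : ContDiffOn ℝ (⊤ : ℕ∞) (auxS ξ (auxS ξ b)) U :=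
    (hξreg.inv hξne).mul
      ((hBs_reg.fderiv_of_isOpen hU (by simp)).clm_apply contDiffOn_const)
  have hBsd : ∀ q ∈ U, DifferentiableAt ℝ (auxS ξ b) q := fun q hq =>
    (hBs_reg.contDiffAt (hU.mem_nhds hq)).differentiableAt (by simp)
  have hCsd : ∀ q ∈ U, DifferentiableAt ℝ (auxS ξ c) q := fun q hq =>
    (hCs_reg.contDiffAt (hU.mem_nhds hq)).differentiableAt (by simp)
  have hBssd : ∀ q ∈ U, DifferentiableAt ℝ (auxS ξ (auxS ξ b)) q := fun q hq =>
    (hBss_reg.contDiffAt (hU.mem_nhds hq)).differentiableAt (by simp)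
  -- identification of derivS with the smooth representatives on U
  have hBsU : ∀ q ∈ U, derivS ξ b q = auxS ξ b q := fun q hq => by
    rw [derivS, partialX_eq (hbd q hq)]; rfl
  have hCsU : ∀ q ∈ U, derivS ξ c q = auxS ξ c q := fun q hq => by
    rw [derivS, partialX_eq (hcd q hq)]; rfl
  have hBssU : ∀ q ∈ U, derivS ξ (derivS ξ b) q = auxS ξ (auxS ξ b) q := fun q hq => by
    rw [derivS, partialX_congr hU hBsU hq, partialX_eq (hBsd q hq)]; rfl
  have hCssU : derivS ξ (derivS ξ c) p = (ξ p)⁻¹ * fderiv ℝ (auxS ξ c) p (1, 0) := by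
    rw [derivS, partialX_congr hU hCsU hp, partialX_eq (hCsd p hp)]
  have hBsssU : derivS ξ (derivS ξ (derivS ξ b)) p
      = (ξ p)⁻¹ * fderiv ℝ (auxS ξ (auxS ξ b)) p (1, 0) := by
    rw [derivS, partialX_congr hU hBssU hp, partialX_eq (hBssd p hp)]
  -- fderiv values at p in the x-direction
  have hbx : fderiv ℝ b p (1, 0) = ξ p * derivS ξ b p := by
    rw [hBsU p hp]; simp only [auxS]; field_simp
  have hcx : fderiv ℝ c p (1, 0) = ξ p * derivS ξ c p := by
    rw [hCsU p hp]; simp only [auxS]; field_simp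
  have hbsx : fderiv ℝ (auxS ξ b) p (1, 0) = ξ p * derivS ξ (derivS ξ b) p := by
    rw [hBssU p hp]; simp only [auxS]; field_simp
  have hcsx : fderiv ℝ (auxS ξ c) p (1, 0) = ξ p * derivS ξ (derivS ξ c) p := by
    rw [hCssU]; field_simp
  have hbssx : fderiv ℝ (auxS ξ (auxS ξ b)) p (1, 0)
      = ξ p * derivS ξ (derivS ξ (derivS ξ b)) p := by
    rw [hBsssU]; field_simp
  -- x-slice derivatives at p
  have h1 : HasDerivAt (fun y => auxS ξ (auxS ξ b) (y, p.2))
      (ξ p * derivS ξ (derivS ξ (derivS ξ b)) p) p.1 := by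
    rw [← hbssx]; exact hasDerivAt_sliceX _ (hBssd p hp)
  have h2 : HasDerivAt (fun y => auxS ξ c (y, p.2))
      (ξ p * derivS ξ (derivS ξ c) p) p.1 := by
    rw [← hcsx]; exact hasDerivAt_sliceX _ (hCsd p hp)
  have h3 : HasDerivAt (fun y => auxS ξ b (y, p.2))
      (ξ p * derivS ξ (derivS ξ b) p) p.1 := by
    rw [← hbsx]; exact hasDerivAt_sliceX _ (hBsd p hp)
  have h4 : HasDerivAt (fun y => b (y, p.2)) (ξ p * derivS ξ b p) p.1 := by
    rw [← hbx]; exact hasDerivAt_sliceX _ (hbd p hp)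
  have h5 : HasDerivAt (fun y => c (y, p.2)) (ξ p * derivS ξ c p) p.1 := by
    rw [← hcx]; exact hasDerivAt_sliceX _ (hcd p hp)
  have hB0' : b (p.1, p.2) ≠ 0 := hB0
  have hC0' : c (p.1, p.2) ≠ 0 := hC0
  -- second-derivative symmetry for b
  have hbC : ContDiffAt ℝ (⊤ : ℕ∞) b p := hbreg.contDiffAt hpU
  have hsymm := (hbC.isSymmSndFDerivAt (by simp; exact WithTop.coe_le_coe.mpr (le_top : (2 : ℕ∞) ≤ ⊤))) (0, 1) (1, 0)
  have hfd : DifferentiableAt ℝ (fderiv ℝ b) p :=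
    (hbC.fderiv_right (m := (⊤ : ℕ∞)) (by simp)).differentiableAt (by simp)
  have hBxT : HasDerivAt (fun τ => fderiv ℝ b (p.1, τ) (1, 0))
      (fderiv ℝ (fderiv ℝ b) p (0, 1) (1, 0)) p.2 := by
    have h := (hasDerivAt_sliceT (fderiv ℝ b) hfd).clm_apply
      (hasDerivAt_const p.2 ((1 : ℝ), (0 : ℝ)))
    simpa using h
  have hBtX : HasDerivAt (fun y => fderiv ℝ b (y, p.2) (0, 1))
      (fderiv ℝ (fderiv ℝ b) p (1, 0) (0, 1)) p.1 := by
    have h := (hasDerivAt_sliceX (fderiv ℝ b) hfd).clm_apply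
      (hasDerivAt_const p.1 ((0 : ℝ), (1 : ℝ)))
    simpa using h
  -- the time derivative of b on U, via the flow equation
  have hBt_eqU : ∀ q ∈ U, fderiv ℝ b q (0, 1)
      = auxS ξ (auxS ξ b) q + (auxS ξ c q / c q + auxS ξ b q / b q) * auxS ξ b q
        + 2 * (c q / b q) ^ 2 / b q - 4 / b q := fun q hq => by
    rw [← partialT_eq (hbd q hq), hflowb q hq, hBssU q hq, hCsU q hq, hBsU q hq]
  -- derivative of the x-slice of the flow RHS
  have hE := ((h1.add (((h2.div h5 hC0').add (h3.div h4 hB0')).mul h3)).add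
      ((((h5.div h4 hB0').pow 2).const_mul 2).div h4 hB0')).sub
      ((hasDerivAt_const p.1 (4 : ℝ)).div h4 hB0')
  have hkey : fderiv ℝ (fderiv ℝ b) p (0, 1) (1, 0)
      = deriv (fun y => auxS ξ (auxS ξ b) (y, p.2)
          + (auxS ξ c (y, p.2) / c (y, p.2) + auxS ξ b (y, p.2) / b (y, p.2))
              * auxS ξ b (y, p.2)
          + 2 * (c (y, p.2) / b (y, p.2)) ^ 2 / b (y, p.2) - 4 / b (y, p.2)) p.1 := by
    rw [hsymm, ← hBtX.deriv]
    exact (sliceX_eventuallyEq hU hBt_eqU hp).deriv_eq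
  replace hkey := hkey.trans hE.deriv
  simp only [Pi.add_apply, Pi.div_apply, Pi.pow_apply, Pi.mul_apply] at hkey
  -- the time derivative of b_s
  have hξT : HasDerivAt (fun τ => ξ (p.1, τ)) (fderiv ℝ ξ p (0, 1)) p.2 :=
    hasDerivAt_sliceT ξ (hξd p hp)
  have hmain : partialT (derivS ξ b) p
      = -(fderiv ℝ ξ p (0, 1)) / ξ p ^ 2 * fderiv ℝ b p (1, 0)
        + (ξ p)⁻¹ * (fderiv ℝ (fderiv ℝ b) p (0, 1) (1, 0)) := by
    rw [partialT_congr hU hBsU hp]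
    exact ((hξT.inv hX0).mul hBxT).deriv
  rw [hmain, ← partialT_eq (hξd p hp), hflowξ p hp, hbx, hkey]
  simp only [lapS, Prod.mk.eta]
  rw [← hBsU p hp, ← hCsU p hp]
  field_simp
  have hbinv : b p * (b p)⁻¹ = 1 := mul_inv_cancel₀ hB0
  linear_combination (-4 * ξ p * c p ^ 4 * derivS ξ b p + 4 * ξ p * b p * c p ^ 3 * derivS ξ c p) * hbinv
end

section
/- Let c(s) := ∫₀^s dy/(1 + y⁴) for s ≥ 0. Then for all s > 0: (i) c(s) ≤ s; (ii) c″(s) ≤ 0; (iii) c(s)³ · (1 + s⁴) ≥ s³, equivalently c(s) ≥ s·(1 + s⁴)^{−1/3}. -/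
open Real

private lemma hpos (s : ℝ) : (0:ℝ) < 1 + s ^ 4 := by positivity

private lemma hcont8 : Continuous (fun y : ℝ => 1 / (1 + y ^ 4)) := by
  apply Continuous.div continuous_const (by continuity)
  intro x; exact (hpos x).ne'

private lemma key8 (t : ℝ) (ht : 0 ≤ t) : 1 - t/3 ≤ (1 + t) ^ ((1:ℝ)/3) := by
  rcases le_or_gt (1 - t/3) 0 with h | h
  · exact h.trans (Real.rpow_pos_of_pos (by linarith) _).le
  · have haux : (0:ℝ) ≤ t^3 - 9*t^2 + 54*t := by
      nlinarith [mul_nonneg ht (by nlinarith [sq_nonneg (t - 9/2)] : (0:ℝ) ≤ t^2 - 9*t + 54)]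
    have h3 : (1 - t/3) ^ (3:ℕ) ≤ 1 + t := by
      have e : (1 - t/3) ^ (3:ℕ) = 1 - t + t^2/3 - t^3/27 := by ring
      rw [e]; linarith
    have h4 := Real.rpow_le_rpow (by positivity) h3 (by norm_num : (0:ℝ) ≤ 1/3)
    rwa [← Real.rpow_natCast (1 - t/3) 3, ← Real.rpow_mul h.le,
      (by norm_num : ((3:ℕ):ℝ) * (1/3) = 1), Real.rpow_one] at h4

/-- For `c(s) := ∫₀ˢ dy/(1+y⁴)` and all `s > 0`: (i) `c(s) ≤ s`; (ii) `c''(s) ≤ 0`;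
(iii) `c(s)³(1+s⁴) ≥ s³`, equivalently `c(s) ≥ s (1+s⁴)^{-1/3}`. -/
theorem stmt_8 (c : ℝ → ℝ)
    (hc : ∀ s, c s = ∫ y in (0 : ℝ)..s, 1 / (1 + y ^ 4)) :
    ∀ s > 0, c s ≤ s ∧ deriv (deriv c) s ≤ 0 ∧
      (c s) ^ 3 * (1 + s ^ 4) ≥ s ^ 3 ∧
      c s ≥ s * (1 + s ^ 4) ^ (-(1 / 3) : ℝ) := by
  have hceq : c = fun s => ∫ y in (0 : ℝ)..s, 1 / (1 + y ^ 4) := funext hc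
  subst hceq
  -- derivative of c
  have hc' : ∀ s : ℝ, HasDerivAt (fun s => ∫ y in (0 : ℝ)..s, 1 / (1 + y ^ 4))
      (1 / (1 + s ^ 4)) s := fun s => (hcont8.integral_hasStrictDerivAt 0 s).hasDerivAt
  have hdc : deriv (fun s => ∫ y in (0 : ℝ)..s, 1 / (1 + y ^ 4))
      = fun s => 1 / (1 + s ^ 4) := funext fun s => (hc' s).deriv
  -- derivative of f
  have hb : ∀ s : ℝ, HasDerivAt (fun x : ℝ => 1 + x ^ 4) (4 * s ^ 3) s := by
    intro s
    simpa using (hasDerivAt_pow 4 s).const_add 1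
  have hf' : ∀ s : ℝ, HasDerivAt (fun x : ℝ => x * (1 + x ^ 4) ^ (-(1/3) : ℝ))
      (1 * (1 + s ^ 4) ^ (-(1/3) : ℝ)
        + s * ((-(1/3) : ℝ) * (1 + s ^ 4) ^ ((-(1/3) : ℝ) - 1) * (4 * s ^ 3))) s := by
    intro s
    have h2 : HasDerivAt (fun x : ℝ => (1 + x ^ 4) ^ (-(1/3) : ℝ))
        ((-(1/3) : ℝ) * (1 + s ^ 4) ^ ((-(1/3) : ℝ) - 1) * (4 * s ^ 3)) s :=
      by have := (Real.hasDerivAt_rpow_const (p := (-(1/3) : ℝ)) (Or.inl (hpos s).ne')).comp s (hb s)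
         simp only [Function.comp_def] at this; exact this
    exact (hasDerivAt_id s).mul h2
  -- g := c - f has nonnegative derivative everywhere
  have hg' : ∀ s : ℝ, 0 ≤ 1 / (1 + s ^ 4)
      - (1 * (1 + s ^ 4) ^ (-(1/3) : ℝ)
        + s * ((-(1/3) : ℝ) * (1 + s ^ 4) ^ ((-(1/3) : ℝ) - 1) * (4 * s ^ 3))) := by
    intro s
    have hx := hpos s
    have ht : (0:ℝ) ≤ s ^ 4 := by positivity
    have hC := key8 (s ^ 4) ht
    have hB : (0:ℝ) < (1 + s ^ 4) ^ ((-(1/3) : ℝ) - 1) := Real.rpow_pos_of_pos hx _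
    have eBC : (1 + s ^ 4) ^ ((-(1/3) : ℝ) - 1) * (1 + s ^ 4) ^ ((1:ℝ)/3)
        = (1 + s ^ 4)⁻¹ := by
      rw [← Real.rpow_add hx, ← Real.rpow_neg_one (1 + s ^ 4)]
      norm_num
    have eBA : (1 + s ^ 4) ^ ((-(1/3) : ℝ) - 1) * (1 + s ^ 4)
        = (1 + s ^ 4) ^ (-(1/3) : ℝ) := by
      nth_rewrite 2 [← Real.rpow_one (1 + s ^ 4)]
      rw [← Real.rpow_add hx]
      norm_num
    rw [one_div]
    nlinarith [mul_le_mul_of_nonneg_left hC hB.le]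
  have hgd : ∀ x : ℝ, HasDerivAt
      (fun x => (∫ y in (0:ℝ)..x, 1 / (1 + y ^ 4)) - x * (1 + x ^ 4) ^ (-(1/3) : ℝ))
      (1 / (1 + x ^ 4) - (1 * (1 + x ^ 4) ^ (-(1/3) : ℝ)
        + x * ((-(1/3) : ℝ) * (1 + x ^ 4) ^ ((-(1/3) : ℝ) - 1) * (4 * x ^ 3)))) x :=
    fun x => (hc' x).sub (hf' x)
  have hmono : MonotoneOn
      (fun x => (∫ y in (0:ℝ)..x, 1 / (1 + y ^ 4)) - x * (1 + x ^ 4) ^ (-(1/3) : ℝ))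
      (Set.Ici 0) := by
    apply monotoneOn_of_deriv_nonneg (convex_Ici 0)
    · exact fun x _ => ((hgd x).differentiableAt).continuousAt.continuousWithinAt
    · exact fun x _ => (hgd x).differentiableAt.differentiableWithinAt
    · intro x _
      rw [(hgd x).deriv]
      exact hg' x
  have hmain : ∀ s : ℝ, 0 ≤ s →
      s * (1 + s ^ 4) ^ (-(1/3) : ℝ) ≤ ∫ y in (0:ℝ)..s, 1 / (1 + y ^ 4) := by
    intro s hs
    have h0 := hmono (Set.self_mem_Ici) (Set.mem_Ici.mpr hs) hs
    simpa using h0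
  intro s hs
  refine ⟨?_, ?_, ?_, ?_⟩
  · -- (i)
    have h1 : (∫ y in (0:ℝ)..s, 1 / (1 + y ^ 4)) ≤ ∫ y in (0:ℝ)..s, (1:ℝ) := by
      apply intervalIntegral.integral_mono_on hs.le
        (hcont8.intervalIntegrable _ _) intervalIntegrable_const
      intro y _
      rw [div_le_one (hpos y)]
      nlinarith [pow_nonneg (le_of_eq rfl : (0:ℝ) ≤ 0), sq_nonneg (y^2)]
    simpa using h1
  · -- (ii)
    rw [hdc]
    have h2 : HasDerivAt (fun s : ℝ => 1 / (1 + s ^ 4))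
        (-(4 * s ^ 3) / (1 + s ^ 4) ^ 2) s := by
      simpa [one_div, Pi.inv_def] using (hb s).inv (hpos s).ne'
    rw [h2.deriv]
    apply div_nonpos_of_nonpos_of_nonneg
    · nlinarith [pow_pos hs 3]
    · positivity
  · -- (iii)
    have hm := hmain s hs.le
    have hfpos : (0:ℝ) ≤ s * (1 + s ^ 4) ^ (-(1/3) : ℝ) :=
      mul_nonneg hs.le (Real.rpow_pos_of_pos (hpos s) _).le
    have fcube : (s * (1 + s ^ 4) ^ (-(1/3) : ℝ)) ^ 3 * (1 + s ^ 4) = s ^ 3 := by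
      have e : ((1 + s ^ 4) ^ (-(1/3) : ℝ)) ^ (3:ℕ) = (1 + s ^ 4)⁻¹ := by
        rw [← Real.rpow_natCast ((1 + s ^ 4) ^ (-(1/3) : ℝ)) 3,
          ← Real.rpow_mul (hpos s).le]
        norm_num [Real.rpow_neg_one]
      rw [mul_pow, e]
      field_simp
    have hcube : (s * (1 + s ^ 4) ^ (-(1/3) : ℝ)) ^ 3
        ≤ (∫ y in (0:ℝ)..s, 1 / (1 + y ^ 4)) ^ 3 := pow_le_pow_left₀ hfpos hm 3
    calc s ^ 3 = (s * (1 + s ^ 4) ^ (-(1/3) : ℝ)) ^ 3 * (1 + s ^ 4) := fcube.symm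
      _ ≤ (∫ y in (0:ℝ)..s, 1 / (1 + y ^ 4)) ^ 3 * (1 + s ^ 4) :=
        mul_le_mul_of_nonneg_right hcube (hpos s).le
  · exact hmain s hs.le
end

section
/- Let J ⊆ (0,∞) be an open interval, b, c : J → ℝ smooth with b, c > 0, and set u := c/b and R := 2·( −2b″/b − c″/c + (4 − 3u² − (b′)²)/b² + 2(u² − b′c′/u)/b² ). Suppose at some s₀ ∈ J one has b′(s₀) ≥ 0, c′(s₀) ≥ 0, 2b′(s₀) + c′(s₀)/u(s₀) − 4 > 0, and the derivative of s ↦ 2b′(s) + c′(s)/u(s) is strictly positive at s₀. Then R(s₀) < 0. -/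
/-- Computational core of Lemma `firstderivativesancientbounded`: if at a point
`s₀` of an open interval `J ⊆ (0,∞)` a warped Berger metric with `b', c' ≥ 0` has
`2b' + c'/u − 4 > 0` and `(2b' + c'/u)' > 0`, then its scalar curvature
`R = 2(−2b''/b − c''/c + (4 − 3u² − b'²)/b² + 2(u² − b'c'/u)/b²)` is negative
at `s₀`. -/
theorem stmt_10 (J : Set ℝ) (hJopen : IsOpen J) (hJpos : J ⊆ Set.Ioi 0)
    (b c : ℝ → ℝ)
    (hbreg : ContDiffOn ℝ (⊤ : ℕ∞) b J) (hcreg : ContDiffOn ℝ (⊤ : ℕ∞) c J)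
    (hbpos : ∀ s ∈ J, 0 < b s) (hcpos : ∀ s ∈ J, 0 < c s)
    (s₀ : ℝ) (hs₀ : s₀ ∈ J)
    (hbs : 0 ≤ deriv b s₀) (hcs : 0 ≤ deriv c s₀)
    (hval : 2 * deriv b s₀ + deriv c s₀ / (c s₀ / b s₀) - 4 > 0)
    (hder : 0 < deriv (fun s => 2 * deriv b s + deriv c s / (c s / b s)) s₀) :
    2 * (-2 * deriv (deriv b) s₀ / b s₀ - deriv (deriv c) s₀ / c s₀
        + (4 - 3 * (c s₀ / b s₀) ^ 2 - (deriv b s₀) ^ 2) / (b s₀) ^ 2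
        + 2 * ((c s₀ / b s₀) ^ 2
            - deriv b s₀ * deriv c s₀ / (c s₀ / b s₀)) / (b s₀) ^ 2) < 0 := by
  have hmem : J ∈ nhds s₀ := hJopen.mem_nhds hs₀
  have hB : 0 < b s₀ := hbpos s₀ hs₀
  have hC : 0 < c s₀ := hcpos s₀ hs₀
  have hU : 0 < c s₀ / b s₀ := div_pos hC hB
  have hb1 : ContDiffOn ℝ (⊤ : ℕ∞) (deriv b) J := hbreg.deriv_of_isOpen hJopen (by simp)
  have hc1 : ContDiffOn ℝ (⊤ : ℕ∞) (deriv c) J := hcreg.deriv_of_isOpen hJopen (by simp)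
  have hb' : HasDerivAt b (deriv b s₀) s₀ :=
    ((hbreg.contDiffAt hmem).differentiableAt (by simp)).hasDerivAt
  have hc' : HasDerivAt c (deriv c s₀) s₀ :=
    ((hcreg.contDiffAt hmem).differentiableAt (by simp)).hasDerivAt
  have hb2 : HasDerivAt (deriv b) (deriv (deriv b) s₀) s₀ :=
    ((hb1.contDiffAt hmem).differentiableAt (by simp)).hasDerivAt
  have hc2 : HasDerivAt (deriv c) (deriv (deriv c) s₀) s₀ :=
    ((hc1.contDiffAt hmem).differentiableAt (by simp)).hasDerivAt
  set B := b s₀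
  set C := c s₀
  set x := deriv b s₀
  set y := deriv c s₀
  set B2 := deriv (deriv b) s₀
  set C2 := deriv (deriv c) s₀
  have hu : HasDerivAt (fun s => c s / b s) ((y * B - C * x) / B ^ 2) s₀ :=
    hc'.div hb' hB.ne'
  have hF : HasDerivAt (fun s => 2 * deriv b s + deriv c s / (c s / b s))
      (2 * B2 + (C2 * (C / B) - y * ((y * B - C * x) / B ^ 2)) / (C / B) ^ 2) s₀ :=
    (hb2.const_mul 2).add (hc2.div hu hU.ne')
  rw [hF.deriv] at hder
  have hBne : B ≠ 0 := hB.ne'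
  have hCne : C ≠ 0 := hC.ne'
  -- key identity: R = 2*(-D/B + (4 - U^2 - x^2 - x*Y - Y^2)/B^2) with Y = y*B/C
  have key : 2 * (-2 * B2 / B - C2 / C + (4 - 3 * (C / B) ^ 2 - x ^ 2) / B ^ 2
        + 2 * ((C / B) ^ 2 - x * y / (C / B)) / B ^ 2)
      = 2 * (-(2 * B2 + (C2 * (C / B) - y * ((y * B - C * x) / B ^ 2)) / (C / B) ^ 2) / B
        + (4 - (C / B) ^ 2 - x ^ 2 - x * (y * B / C) - (y * B / C) ^ 2) / B ^ 2) := by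
    field_simp
    ring
  rw [key]
  have hY : 0 ≤ y * B / C := by positivity
  have hYval : 2 * x + y * B / C - 4 > 0 := by
    have : y / (C / B) = y * B / C := by field_simp
    linarith [hval, this ▸ hval]
  have h4 : 4 < x ^ 2 + x * (y * B / C) + (y * B / C) ^ 2 := by
    nlinarith [sq_nonneg (2 * x + y * B / C - 4), sq_nonneg (y * B / C), hYval, hbs, hY]
  have hU2 : 0 < (C / B) ^ 2 := by positivity
  have h1 : -(2 * B2 + (C2 * (C / B) - y * ((y * B - C * x) / B ^ 2)) / (C / B) ^ 2) / B < 0 := by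
    exact div_neg_of_neg_of_pos (by linarith) hB
  have h2 : (4 - (C / B) ^ 2 - x ^ 2 - x * (y * B / C) - (y * B / C) ^ 2) / B ^ 2 < 0 := by
    apply div_neg_of_neg_of_pos (by nlinarith) (by positivity)
  linarith
end

section
/- For all real numbers u ∈ (0,1] and X, Y ≥ 0 satisfying X − Y − 2(1 − u) > 0, one has X·(4 − X² − Y² − 14u²) + Y·(X² + Y² + 4 + 6u²) + 2u·(−3X² − Y² + 4XY + 4(1 − u²)) < 0. -/
/-- Computational core of Lemma `lemmaforARF2`: for `u ∈ (0,1]`, `X, Y ≥ 0` with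
`X − Y − 2(1−u) > 0`, the bound on the evolution of `φ = b_s − c_s u⁻¹ − 2(1−u)`
at a positive maximum is negative. -/
theorem stmt_12 :
    ∀ u X Y : ℝ, 0 < u → u ≤ 1 → 0 ≤ X → 0 ≤ Y → X - Y - 2 * (1 - u) > 0 →
      X * (4 - X ^ 2 - Y ^ 2 - 14 * u ^ 2) + Y * (X ^ 2 + Y ^ 2 + 4 + 6 * u ^ 2)
        + 2 * u * (-3 * X ^ 2 - Y ^ 2 + 4 * X * Y + 4 * (1 - u ^ 2)) < 0 := by
  intro u X Y hu hu1 hX hY hφ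
  set φ : ℝ := X - Y - 2 * (1 - u) with hφdef
  have key : X * (4 - X ^ 2 - Y ^ 2 - 14 * u ^ 2) + Y * (X ^ 2 + Y ^ 2 + 4 + 6 * u ^ 2)
      + 2 * u * (-3 * X ^ 2 - Y ^ 2 + 4 * X * Y + 4 * (1 - u ^ 2))
      = -4 * (1 - u) * (Y - u) ^ 2
        + φ * (-φ ^ 2 - φ * (6 + 2 * Y) - 2 * Y ^ 2 - 8 * Y + 4 * Y * u - 8 - 2 * u ^ 2) := by
    rw [hφdef]; ring
  rw [key]
  have h1 : -4 * (1 - u) * (Y - u) ^ 2 ≤ 0 := by nlinarith [sq_nonneg (Y - u)]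
  have h2 : -φ ^ 2 - φ * (6 + 2 * Y) - 2 * Y ^ 2 - 8 * Y + 4 * Y * u - 8 - 2 * u ^ 2 < 0 := by
    nlinarith [sq_nonneg φ, sq_nonneg Y, mul_nonneg hY (sub_nonneg.mpr hu1)]
  nlinarith [mul_pos hφ (neg_pos.mpr h2)]
end

section
/- For all real numbers u ∈ (0,1] and z with u < z < 2, one has u²·(2 − √(1 + (4 − z²)/u²)) < u·(z + u − 2). -/
/-- The smaller root `y₋ = u²(2 − √(1 + u⁻²(4 − z²)))` of the quadratic arising in
the evolution of `J₂ = b_s + u − 2` at a negative minimum lies strictly below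
`u(z + u − 2)`, for `u ∈ (0,1]` and `u < z < 2`. -/
theorem stmt_13 :
    ∀ u z : ℝ, 0 < u → u ≤ 1 → u < z → z < 2 →
      u ^ 2 * (2 - Real.sqrt (1 + (4 - z ^ 2) / u ^ 2)) < u * (z + u - 2) := by
  intro u z hu hu1 huz hz2
  have hu2 : (0:ℝ) < u ^ 2 := by positivity
  have hrw : 1 + (4 - z ^ 2) / u ^ 2 = (u ^ 2 + 4 - z ^ 2) / u ^ 2 := by
    field_simp; ring
  have hkey : (u + 2 - z) ^ 2 < u ^ 2 + 4 - z ^ 2 := by nlinarith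
  have hpos : 0 ≤ u ^ 2 + 4 - z ^ 2 := by nlinarith [sq_nonneg (u + 2 - z)]
  have hlt : u + 2 - z < Real.sqrt (u ^ 2 + 4 - z ^ 2) :=
    (Real.lt_sqrt (by linarith)).mpr hkey
  have hsq : Real.sqrt ((u ^ 2 + 4 - z ^ 2) / u ^ 2)
      = Real.sqrt (u ^ 2 + 4 - z ^ 2) / u := by
    rw [Real.sqrt_div hpos, Real.sqrt_sq hu.le]
  rw [hrw, hsq]
  have h2 : u * (u + 2 - z) < u * Real.sqrt (u ^ 2 + 4 - z ^ 2) :=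
    (mul_lt_mul_iff_right₀ hu).mpr hlt
  have hdiv : u ^ 2 * (Real.sqrt (u ^ 2 + 4 - z ^ 2) / u)
      = u * Real.sqrt (u ^ 2 + 4 - z ^ 2) := by
    field_simp
  nlinarith [h2, hdiv]
end

section
/- For all real numbers u ∈ (0,1], X > 0 and Y ∈ ℝ satisfying X + u < 2 and u·X − 2u·(1 − u) ≤ Y ≤ 2u², one has Y²/u² − 4Y + (X + u)² − 4 + 3u² < 0. -/
/-- Combined computational content of Lemma `lemmastationaryoded`: with
`u ∈ (0,1]`, `X > 0`, `X + u < 2` and `uX − 2u(1−u) ≤ Y ≤ 2u²`, the quadratic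
`Y²/u² − 4Y + (X+u)² − 4 + 3u²` is negative, so `∂ₜJ₂ > 0` at any negative
minimum of `J₂ = b_s + u − 2`. -/
theorem stmt_14 :
    ∀ u X Y : ℝ, 0 < u → u ≤ 1 → 0 < X → X + u < 2 →
      u * X - 2 * u * (1 - u) ≤ Y → Y ≤ 2 * u ^ 2 →
      Y ^ 2 / u ^ 2 - 4 * Y + (X + u) ^ 2 - 4 + 3 * u ^ 2 < 0 := by
  intro u X Y hu hu1 hX hXu h1 h2
  have hu2 : (0:ℝ) < u ^ 2 := by positivity
  have key : Y ^ 2 < (4 * Y - (X + u) ^ 2 + 4 - 3 * u ^ 2) * u ^ 2 := by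
    nlinarith [mul_pos hu hX, sq_nonneg (Y - 2 * u ^ 2), sq_nonneg (Y - u * X + 2 * u * (1 - u)),
      mul_nonneg (sub_nonneg.2 h1) (sub_nonneg.2 h2), sq_nonneg (X + u - 2), sq_nonneg u,
      mul_pos hu (sub_pos.2 hXu), mul_nonneg (mul_nonneg (sub_nonneg.2 h1) (sub_nonneg.2 h2)) hu.le]
  have := (div_lt_iff₀ hu2).2 key
  linarith
end

section
/- Let r > 0 and let b, c : (−r, r) → ℝ be smooth odd functions with b′(0) = c′(0) = 1 and b(s), c(s) > 0 for s ∈ (0, r). Define for s ∈ (0,r) the scalar curvature expression R(s) := 2·(−2b″/b − c″/c + (4 − 3u² − (b′)²)/b² + 2(u² − b′c′/u)/b²) with u := c/b, and J₂(s) := b′(s) + u(s) − 2. Then: (i) R(s) → −4·(c‴(0) + 2b‴(0)) as s → 0⁺; (ii) J₂(s)/s² → (2b‴(0) + c‴(0))/6 as s → 0⁺; consequently, if J₂ ≥ 0 on (0, r), then lim_{s→0⁺} R(s) ≤ 0. -/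
open Set Filter Topology

lemma aux_limits (r : ℝ) (hr : 0 < r) (f : ℝ → ℝ)
    (hf : ContDiffOn ℝ (⊤ : ℕ∞) f (Set.Ioo (-r) r))
    (hodd : ∀ s ∈ Set.Ioo (-r) r, f (-s) = -(f s))
    (hf0 : deriv f 0 = 1) :
    Tendsto (fun s => f s / s) (𝓝[>] 0) (𝓝 1) ∧
    Tendsto (deriv f) (𝓝[>] 0) (𝓝 1) ∧
    Tendsto (fun s => (deriv f s - 1) / s ^ 2) (𝓝[>] 0)
      (𝓝 (deriv (deriv (deriv f)) 0 / 2)) ∧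
    Tendsto (fun s => (f s - s) / s ^ 3) (𝓝[>] 0)
      (𝓝 (deriv (deriv (deriv f)) 0 / 6)) ∧
    Tendsto (fun s => deriv (deriv f) s / s) (𝓝[>] 0)
      (𝓝 (deriv (deriv (deriv f)) 0)) := by
  have hIoo : IsOpen (Set.Ioo (-r) r) := isOpen_Ioo
  have hm0 : (0:ℝ) ∈ Set.Ioo (-r) r := ⟨by linarith, hr⟩
  have hsub : Set.Ioo (0:ℝ) r ⊆ Set.Ioo (-r) r := Set.Ioo_subset_Ioo (by linarith) le_rfl
  have hf1 : ContDiffOn ℝ (⊤ : ℕ∞) (deriv f) (Set.Ioo (-r) r) :=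
    hf.deriv_of_isOpen hIoo (by simp)
  have hf2 : ContDiffOn ℝ (⊤ : ℕ∞) (deriv (deriv f)) (Set.Ioo (-r) r) :=
    hf1.deriv_of_isOpen hIoo (by simp)
  have hdf : ∀ x ∈ Set.Ioo (-r) r, DifferentiableAt ℝ f x := fun x hx =>
    (hf.differentiableOn (by simp)).differentiableAt (hIoo.mem_nhds hx)
  have hdf1 : ∀ x ∈ Set.Ioo (-r) r, DifferentiableAt ℝ (deriv f) x := fun x hx =>
    (hf1.differentiableOn (by simp)).differentiableAt (hIoo.mem_nhds hx)
  have hdf2 : ∀ x ∈ Set.Ioo (-r) r, DifferentiableAt ℝ (deriv (deriv f)) x := fun x hx =>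
    (hf2.differentiableOn (by simp)).differentiableAt (hIoo.mem_nhds hx)
  -- f 0 = 0
  have h00 : f 0 = 0 := by have := hodd 0 hm0; simp at this; linarith
  -- deriv f is even on Ioo
  have heven : ∀ s ∈ Set.Ioo (-r) r, deriv f (-s) = deriv f s := by
    intro s hs
    have heq : (fun t => f (-t)) =ᶠ[𝓝 s] fun t => -(f t) :=
      eventually_of_mem (hIoo.mem_nhds hs) (fun t ht => hodd t ht)
    have := heq.deriv_eq
    rw [deriv_comp_neg, show (fun t => -(f t)) = -f from rfl, deriv.neg] at this
    linarith
  -- deriv (deriv f) is odd on Ioo, hence vanishes at 0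
  have h20 : deriv (deriv f) 0 = 0 := by
    have heq : (fun t => deriv f (-t)) =ᶠ[𝓝 (0:ℝ)] deriv f :=
      eventually_of_mem (hIoo.mem_nhds hm0) (fun t ht => heven t ht)
    have := heq.deriv_eq
    rw [deriv_comp_neg] at this
    simp at this
    linarith
  set β : ℝ := deriv (deriv (deriv f)) 0 with hβ
  -- L1 : f s / s → 1
  have hL1 : Tendsto (fun s => f s / s) (𝓝[>] 0) (𝓝 1) := by
    have h := (hdf 0 hm0).hasDerivAt
    rw [hf0] at h
    have := hasDerivAt_iff_tendsto_slope.mp h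
    have h2 := this.mono_left (nhdsWithin_mono 0 (fun x hx => ne_of_gt hx))
    refine h2.congr (fun x => ?_)
    simp [slope_def_field, h00]
  -- L2 : deriv f → 1
  have hL2 : Tendsto (deriv f) (𝓝[>] 0) (𝓝 1) := by
    have := (hf1.continuousOn.continuousAt (hIoo.mem_nhds hm0)).tendsto
    rw [hf0] at this
    exact this.mono_left nhdsWithin_le_nhds
  -- L3 : deriv (deriv f) s / s → β
  have hL3 : Tendsto (fun s => deriv (deriv f) s / s) (𝓝[>] 0) (𝓝 β) := by
    have h := (hdf2 0 hm0).hasDerivAt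
    have := hasDerivAt_iff_tendsto_slope.mp h
    have h2 := this.mono_left (nhdsWithin_mono 0 (fun x hx => ne_of_gt hx))
    refine h2.congr (fun x => ?_)
    simp [slope_def_field, h20]
  -- L4 : (deriv f s - 1)/s² → β/2
  have hL4 : Tendsto (fun s => (deriv f s - 1) / s ^ 2) (𝓝[>] 0) (𝓝 (β / 2)) := by
    refine HasDerivAt.lhopital_zero_right_on_Ioo hr
      (f' := fun x => deriv (deriv f) x) (g' := fun x => 2 * x)
      (fun x hx => ((hdf1 x (hsub hx)).hasDerivAt).sub_const 1)
      (fun x hx => by simpa using hasDerivAt_pow 2 x)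
      (fun x hx => by have := hx.1; positivity) ?_ ?_ ?_
    · have := hL2.sub (tendsto_const_nhds (α := ℝ) (x := (1:ℝ)))
      simpa using this
    · have : Tendsto (fun x : ℝ => x ^ 2) (𝓝[>] 0) (𝓝 ((0:ℝ) ^ 2)) :=
        ((continuous_pow 2).tendsto 0).mono_left nhdsWithin_le_nhds
      simpa using this
    · have := hL3.div_const 2
      refine this.congr (fun x => ?_)
      ring
  -- L5 : (f s - s)/s³ → β/6
  have hL5 : Tendsto (fun s => (f s - s) / s ^ 3) (𝓝[>] 0) (𝓝 (β / 6)) := by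
    refine HasDerivAt.lhopital_zero_right_on_Ioo hr
      (f' := fun x => deriv f x - 1) (g' := fun x => 3 * x ^ 2)
      (fun x hx => ((hdf x (hsub hx)).hasDerivAt).sub (hasDerivAt_id x))
      (fun x hx => by simpa using hasDerivAt_pow 3 x)
      (fun x hx => by have := hx.1; positivity) ?_ ?_ ?_
    · have hcf : ContinuousAt f 0 := (hdf 0 hm0).continuousAt
      have := hcf.tendsto.sub (continuous_id.tendsto (0:ℝ))
      rw [h00] at this
      simpa using this.mono_left nhdsWithin_le_nhds
    · have : Tendsto (fun x : ℝ => x ^ 3) (𝓝[>] 0) (𝓝 ((0:ℝ) ^ 3)) :=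
        ((continuous_pow 3).tendsto 0).mono_left nhdsWithin_le_nhds
      simpa using this
    · have h2 := hL4.div_const 3
      have : β / 2 / 3 = β / 6 := by ring
      rw [this] at h2
      refine h2.congr (fun x => ?_)
      ring
  exact ⟨hL1, hL2, hL4, hL5, hL3⟩

set_option maxHeartbeats 1000000

/-- Boundary behaviour at the origin for a smooth warped Berger metric on `ℝ⁴`
(Claim in the proof of the uniqueness theorem): with `b, c` smooth odd on `(−r,r)`,
`b'(0) = c'(0) = 1` and positive on `(0,r)`, the scalar curvature
`R = 2(−2b''/b − c''/c + (4 − 3u² − b'²)/b² + 2(u² − b'c'/u)/b²)` tends to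
`−4(c'''(0) + 2b'''(0))` as `s → 0⁺`, the hyperkähler quantity
`J₂ = b' + u − 2` satisfies `J₂(s)/s² → (2b'''(0) + c'''(0))/6`, and consequently
if `J₂ ≥ 0 on (0,r)` then `lim_{s→0⁺} R(s) ≤ 0`. -/
theorem stmt_16 (r : ℝ) (hr : 0 < r) (b c : ℝ → ℝ)
    (hbreg : ContDiffOn ℝ (⊤ : ℕ∞) b (Set.Ioo (-r) r))
    (hcreg : ContDiffOn ℝ (⊤ : ℕ∞) c (Set.Ioo (-r) r))
    (hbodd : ∀ s ∈ Set.Ioo (-r) r, b (-s) = -(b s))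
    (hcodd : ∀ s ∈ Set.Ioo (-r) r, c (-s) = -(c s))
    (hb0 : deriv b 0 = 1) (hc0 : deriv c 0 = 1)
    (hbpos : ∀ s ∈ Set.Ioo 0 r, 0 < b s)
    (hcpos : ∀ s ∈ Set.Ioo 0 r, 0 < c s)
    (R J₂ : ℝ → ℝ)
    (hR : ∀ s ∈ Set.Ioo 0 r, R s =
      2 * (-2 * deriv (deriv b) s / b s - deriv (deriv c) s / c s
        + (4 - 3 * (c s / b s) ^ 2 - (deriv b s) ^ 2) / (b s) ^ 2
        + 2 * ((c s / b s) ^ 2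
            - deriv b s * deriv c s / (c s / b s)) / (b s) ^ 2))
    (hJ₂ : ∀ s ∈ Set.Ioo 0 r, J₂ s = deriv b s + c s / b s - 2) :
    Filter.Tendsto R (nhdsWithin 0 (Set.Ioi 0))
      (nhds (-4 * (deriv (deriv (deriv c)) 0 + 2 * deriv (deriv (deriv b)) 0))) ∧
    Filter.Tendsto (fun s => J₂ s / s ^ 2) (nhdsWithin 0 (Set.Ioi 0))
      (nhds ((2 * deriv (deriv (deriv b)) 0 + deriv (deriv (deriv c)) 0) / 6)) ∧
    ((∀ s ∈ Set.Ioo 0 r, 0 ≤ J₂ s) →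
      -4 * (deriv (deriv (deriv c)) 0 + 2 * deriv (deriv (deriv b)) 0) ≤ 0) := by
  obtain ⟨hP, hD, hF, hH, hA1⟩ := aux_limits r hr b hbreg hbodd hb0
  obtain ⟨hQ, hE, hG, hK, hA2⟩ := aux_limits r hr c hcreg hcodd hc0
  set β : ℝ := deriv (deriv (deriv b)) 0 with hβdef
  set γ : ℝ := deriv (deriv (deriv c)) 0 with hγdef
  have hmem : Set.Ioo (0:ℝ) r ∈ 𝓝[>] (0:ℝ) := Ioo_mem_nhdsGT_of_mem ⟨le_rfl, hr⟩
  -- u = c/b tends to 1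
  have hu : Tendsto (fun s => c s / b s) (𝓝[>] 0) (𝓝 1) := by
    have h := hQ.div hP one_ne_zero
    rw [show ((1:ℝ)/1) = 1 by norm_num] at h
    refine h.congr' ?_
    filter_upwards [hmem] with s hs
    have hs0 : s ≠ 0 := ne_of_gt hs.1
    have hb : b s ≠ 0 := (hbpos s hs).ne'
    simp only [Pi.div_apply]
    field_simp
  -- first limit: R
  have t1 : Tendsto (fun s => -2 * (deriv (deriv b) s / s) / (b s / s)) (𝓝[>] 0)
      (𝓝 (-2 * β / 1)) := (hA1.const_mul (-2)).div hP one_ne_zero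
  have t2 : Tendsto (fun s => (deriv (deriv c) s / s) / (c s / s)) (𝓝[>] 0)
      (𝓝 (γ / 1)) := hA2.div hQ one_ne_zero
  have t3 : Tendsto (fun s =>
      (-((deriv b s - 1) / s ^ 2) * (deriv b s + 1)
        + 3 * (b s / s + c s / s) * ((b s - s) / s ^ 3 - (c s - s) / s ^ 3) / (b s / s) ^ 2)
        / (b s / s) ^ 2) (𝓝[>] 0)
      (𝓝 ((-(β / 2) * (1 + 1) + 3 * (1 + 1) * (β / 6 - γ / 6) / 1 ^ 2) / 1 ^ 2)) :=
    ((hF.neg.mul (hD.add tendsto_const_nhds)).add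
      ((((hP.add hQ).const_mul 3).mul (hH.sub hK)).div (hP.pow 2) (by norm_num))).div
      (hP.pow 2) (by norm_num)
  have t4 : Tendsto (fun s =>
      2 * ((((c s - s) / s ^ 3 - (b s - s) / s ^ 3) / (b s / s))
            * ((c s / b s) ^ 2 + c s / b s + 1)
          - ((deriv b s - 1) / s ^ 2 * deriv c s + (deriv c s - 1) / s ^ 2))
        / ((c s / b s) * (b s / s) ^ 2)) (𝓝[>] 0)
      (𝓝 (2 * ((γ / 6 - β / 6) / 1 * (1 ^ 2 + 1 + 1) - (β / 2 * 1 + γ / 2))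
        / (1 * 1 ^ 2))) :=
    (((((hK.sub hH).div hP one_ne_zero).mul
        (((hu.pow 2).add hu).add tendsto_const_nhds)).sub
      ((hF.mul hE).add hG)).const_mul 2).div (hu.mul (hP.pow 2)) (by norm_num)
  have hΦ := (((t1.sub t2).add t3).add t4).const_mul 2
  have hval : 2 * ((-2 * β / 1 - γ / 1
      + (-(β / 2) * (1 + 1) + 3 * (1 + 1) * (β / 6 - γ / 6) / 1 ^ 2) / 1 ^ 2)
      + 2 * ((γ / 6 - β / 6) / 1 * (1 ^ 2 + 1 + 1) - (β / 2 * 1 + γ / 2))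
        / (1 * 1 ^ 2)) = -4 * (γ + 2 * β) := by ring
  rw [hval] at hΦ
  have hRlim : Tendsto R (𝓝[>] 0) (𝓝 (-4 * (γ + 2 * β))) := by
    refine hΦ.congr' ?_
    filter_upwards [hmem] with s hs
    have hs0 : s ≠ 0 := ne_of_gt hs.1
    have hb : b s ≠ 0 := (hbpos s hs).ne'
    have hc : c s ≠ 0 := (hcpos s hs).ne'
    rw [hR s hs]
    field_simp
    ring
  have hJlim : Tendsto (fun s => J₂ s / s ^ 2) (𝓝[>] 0) (𝓝 ((2 * β + γ) / 6)) := by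
    have h := hF.add ((hK.sub hH).div hP one_ne_zero)
    have hv : β / 2 + (γ / 6 - β / 6) / 1 = (2 * β + γ) / 6 := by ring
    rw [hv] at h
    refine h.congr' ?_
    filter_upwards [hmem] with s hs
    have hs0 : s ≠ 0 := ne_of_gt hs.1
    have hb : b s ≠ 0 := (hbpos s hs).ne'
    rw [hJ₂ s hs]
    simp only [Pi.div_apply]
    field_simp
    ring
  refine ⟨hRlim, hJlim, fun hJpos => ?_⟩
  have h2 : (0:ℝ) ≤ (2 * β + γ) / 6 := by
    refine ge_of_tendsto hJlim ?_
    filter_upwards [hmem] with s hs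
    exact div_nonneg (hJpos s hs) (sq_nonneg s)
  linarith
end
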